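/- arXiv:2501.18869 — 5 statements merged into one kernel-verified Lean document; each statement's English description precedes it below -/
import Mathlib

section
/- Let s ≥ 3 and let H be a finite simple graph with at least s vertices such that (i) H contains exactly t distinct copies of K_s (distinct s-vertex subsets inducing complete subgraphs), and (ii) there exists an edge e of H such that H − e contains no copy of K_s. Then t ≤ ∏_{j=0}^{s-3} ⌈(|V(H)| − 2 − j)/(s-2)⌉. -/
/-!
Every copy of `K_s` contains both ends `a, b` of `e`, so deleting `a` and `b` sends the copies
injectively to `(s - 2)`-cliques inside the common neighbourhood `C` of `a` and `b`; and `C` spans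
no `K_{s-1}`, since together with `a` it would give a `K_s` avoiding `b`. By Zykov's theorem, `m`
vertices spanning no `K_{r+1}` span at most `t_r(m)` cliques `K_r`, the number in the Turán graph
`T(m, r)`; for `m = |C| ≤ |V(H)| - 2` and `r = s - 2` this is the stated product.

Zykov's theorem goes by induction on `r`: for a vertex `v` of maximal degree every `K_r` meets
the `m - deg v` non-neighbours of `v`, and the copies through such a vertex live in its
neighbourhood, of size at most `deg v`. It remains to see `a * t_r(d) ≤ t_{r+1}(a + d)`, which
holds because a product of naturals with given sum and number of factors is largest when the
factors are balanced.
-/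

open Finset

/-- The number of `r`-cliques of the Turán graph `T(m, r)`, whose `r` parts have sizes
`⌊m / r⌋` and `⌈m / r⌉`. -/
def turanProd (r m : ℕ) : ℕ := (m / r + 1) ^ (m % r) * (m / r) ^ (r - m % r)

theorem prod_eq_turanProd_of_forall_le_add_one {ι : Type*} [Fintype ι] (v : ι → ℕ)
    (hv : ∀ i j, v i ≤ v j + 1) : ∏ i, v i = turanProd (Fintype.card ι) (∑ i, v i) := by
  classical
  cases isEmpty_or_nonempty ι
  · simp [turanProd]
  obtain ⟨i₀, hmin⟩ := Finite.exists_min v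
  set q := v i₀
  set s := #{i | v i = q + 1}
  have hvq : ∀ i, v i = q + if v i = q + 1 then 1 else 0 := fun i => by
    have := hmin i; have := hv i i₀; split_ifs <;> omega
  have hs : s < Fintype.card ι := card_lt_univ_of_notMem (x := i₀) (by simp [q])
  have hsum : ∑ i, v i = s + Fintype.card ι * q := by
    rw [sum_congr rfl fun i _ => hvq i, sum_add_distrib, sum_boole]
    simp [s, add_comm, mul_comm]
  have hprod : ∏ i, v i = (q + 1) ^ s * q ^ (Fintype.card ι - s) := by
    rw [prod_congr rfl fun i _ => (hvq i).trans (apply_ite (q + ·) _ _ _), prod_ite,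
      prod_const, prod_const, ← card_compl, compl_filter]
    simp [s]
  rw [hprod, hsum, turanProd, Nat.add_mul_div_left _ _ (by omega), Nat.div_eq_of_lt hs,
    Nat.add_mul_mod_self_left, Nat.mod_eq_of_lt hs, zero_add]

theorem sum_range_add_div_self (r m : ℕ) (hr : 0 < r) : ∑ j ∈ range r, (m + j) / r = m := by
  induction m with
  | zero => exact sum_eq_zero fun j hj => Nat.div_eq_of_lt (by simpa using hj)
  | succ m ih =>
    have hlast := sum_range_succ (fun j => (m + j) / r) r
    have hfirst := sum_range_succ' (fun j => (m + j) / r) r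
    rw [Nat.add_div_right _ hr] at hlast
    have hshift : ∑ j ∈ range r, (m + 1 + j) / r = ∑ j ∈ range r, (m + (j + 1)) / r :=
      sum_congr rfl fun j _ => by rw [add_assoc, add_comm 1 j]
    simp only [add_zero] at hfirst
    omega

theorem turanProd_eq_prod_range (r m : ℕ) : turanProd r m = ∏ j ∈ range r, (m + j) / r := by
  rcases r.eq_zero_or_pos with rfl | hr
  · simp [turanProd]
  have hbal : ∀ i j : Fin r, (m + i) / r ≤ (m + j) / r + 1 := fun i j => by
    rw [← Nat.add_div_right _ hr]; exact Nat.div_le_div_right (by omega)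
  have := prod_eq_turanProd_of_forall_le_add_one _ hbal
  rwa [Fintype.card_fin, Fin.prod_univ_eq_prod_range (fun j => (m + j) / r),
    Fin.sum_univ_eq_sum_range (fun j => (m + j) / r), sum_range_add_div_self r m hr,
    eq_comm] at this

theorem turanProd_mono (r : ℕ) : Monotone (turanProd r) := fun m m' h => by
  simp only [turanProd_eq_prod_range]
  exact prod_le_prod' fun j _ => Nat.div_le_div_right (by omega)

@[to_additive]
theorem Finset.prod_univ_eq_mul_mul_prod_erase_erase {ι M : Type*} [Fintype ι] [DecidableEq ι]
    [CommMonoid M] (f : ι → M) {i j : ι} (hij : i ≠ j) :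
    ∏ k, f k = f i * (f j * ∏ k ∈ (univ.erase i).erase j, f k) := by
  rw [mul_prod_erase _ _ (mem_erase.2 ⟨hij.symm, mem_univ j⟩), mul_prod_erase _ _ (mem_univ i)]

theorem exists_smoothing {ι : Type*} [Fintype ι] [DecidableEq ι] (v : ι → ℕ) {i j : ι}
    (hij : v j + 2 ≤ v i) :
    ∃ w : ι → ℕ, ∑ k, w k = ∑ k, v k ∧ ∏ k, v k ≤ ∏ k, w k ∧
      ∑ k, w k ^ 2 < ∑ k, v k ^ 2 := by
  have hne : i ≠ j := by rintro rfl; omega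
  obtain ⟨d, hd⟩ := Nat.exists_eq_add_of_le hij
  set w := Function.update (Function.update v i (v j + 1 + d)) j (v j + 1)
  have hwi : w i = v j + 1 + d := by simp [w, hne]
  have hwj : w j = v j + 1 := by simp [w]
  have hrest : ∀ k ∈ (univ.erase i).erase j, w k = v k := fun k hk => by
    obtain ⟨hkj, hki⟩ : k ≠ j ∧ k ≠ i := by simpa using hk
    simp [w, hkj, hki]
  refine ⟨w, ?_, ?_, ?_⟩
  · rw [sum_univ_eq_add_add_sum_erase_erase w hne, sum_univ_eq_add_add_sum_erase_erase v hne,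
      hwi, hwj, hd, sum_congr rfl hrest]
    ring
  · rw [prod_univ_eq_mul_mul_prod_erase_erase w hne, prod_univ_eq_mul_mul_prod_erase_erase v hne,
      hwi, hwj, hd, prod_congr rfl hrest, ← mul_assoc, ← mul_assoc]
    exact Nat.mul_le_mul_right _ (by nlinarith)
  · rw [sum_univ_eq_add_add_sum_erase_erase (w · ^ 2) hne,
      sum_univ_eq_add_add_sum_erase_erase (v · ^ 2) hne, hwi, hwj, hd,
      sum_congr rfl fun k hk => congrArg (· ^ 2) (hrest k hk)]
    nlinarith

theorem prod_le_turanProd {ι : Type*} [Fintype ι] [DecidableEq ι] (v : ι → ℕ) :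
    ∏ i, v i ≤ turanProd (Fintype.card ι) (∑ i, v i) := by
  induction hN : ∑ i, v i ^ 2 using Nat.strong_induction_on generalizing v with
  | _ N ih =>
  by_cases hbal : ∀ i j, v i ≤ v j + 1
  · exact (prod_eq_turanProd_of_forall_le_add_one v hbal).le
  push Not at hbal
  obtain ⟨i, j, hij⟩ := hbal
  obtain ⟨w, hsum, hprod, hsq⟩ := exists_smoothing v (i := i) (j := j) hij
  exact hprod.trans (hsum ▸ ih _ (hN ▸ hsq) w rfl)

theorem mul_turanProd_le (a r d : ℕ) : a * turanProd r d ≤ turanProd (r + 1) (a + d) := by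
  rcases r.eq_zero_or_pos with rfl | hr
  · simp [turanProd, Nat.mod_one]
  have := prod_le_turanProd (Fin.cons a fun j : Fin r => (d + j) / r : Fin (r + 1) → ℕ)
  rwa [Fin.prod_cons, Fin.sum_cons, Fintype.card_fin,
    Fin.prod_univ_eq_prod_range (fun j => (d + j) / r), ← turanProd_eq_prod_range,
    Fin.sum_univ_eq_sum_range (fun j => (d + j) / r), sum_range_add_div_self r d hr] at this

theorem prod_range_ceil_div_eq_turanProd (r m : ℕ) :
    ∏ j ∈ range r, ⌈((m : ℚ) - j) / r⌉ = turanProd r m := by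
  rw [turanProd_eq_prod_range, ← prod_range_reflect, Nat.cast_prod]
  refine prod_congr rfl fun j hj => ?_
  have hjr : j < r := mem_range.1 hj
  have hr : (0 : ℚ) < r := by exact_mod_cast hjr.pos
  have hsub : ((r - 1 - j : ℕ) : ℚ) = r - 1 - j := by
    rw [Nat.cast_sub (by omega), Nat.cast_sub hjr.pos, Nat.cast_one]
  have hdiv : (r : ℚ) * ((m + j) / r : ℕ) + ((m + j) % r : ℕ) = m + j := by
    exact_mod_cast Nat.div_add_mod (m + j) r
  have hmod : (((m + j) % r : ℕ) : ℚ) + 1 ≤ r := by exact_mod_cast Nat.mod_lt _ hjr.pos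
  rw [Int.ceil_eq_iff, lt_div_iff₀ hr, div_le_iff₀ hr, hsub, Int.cast_natCast]
  constructor <;> linarith [Nat.cast_nonneg (α := ℚ) ((m + j) % r)]

namespace SimpleGraph

variable {V : Type*} {G : SimpleGraph V} {n : ℕ} {S : Finset V}

theorem IsNClique.deleteEdges_of_notMem {a b : V} (h : G.IsNClique n S) (hb : b ∉ S) :
    (G.deleteEdges {s(a, b)}).IsNClique n S := by
  refine ⟨fun x hx y hy hxy => (deleteEdges_adj ..).2 ⟨h.isClique hx hy hxy, fun he => hb ?_⟩,
    h.card_eq⟩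
  rcases Sym2.mem_iff.1 (Set.mem_singleton_iff.1 he ▸ Sym2.mem_mk_right a b) with rfl | rfl
  exacts [hx, hy]

theorem IsNClique.mem_of_cliqueFree_deleteEdges {a b : V} (h : G.IsNClique n S)
    (hfree : (G.deleteEdges {s(a, b)}).CliqueFree n) : a ∈ S ∧ b ∈ S := by
  by_contra hab
  rcases not_and_or.1 hab with ha | hb
  · exact hfree S (Sym2.eq_swap ▸ h.deleteEdges_of_notMem ha)
  · exact hfree S (h.deleteEdges_of_notMem hb)

variable [DecidableEq V] [DecidableRel G.Adj] {A : Finset V} {u : V}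

theorem not_isNClique_of_subset_neighbors (hA : ∀ S ⊆ A, ¬ G.IsNClique (n + 1) S)
    (hu : u ∈ A)
    (hS : S ⊆ {x ∈ A | G.Adj u x}) : ¬ G.IsNClique n S := fun hclique =>
  hA _ (insert_subset hu (hS.trans (filter_subset _ _)))
    (hclique.insert fun _ hx => (mem_filter.1 (hS hx)).2)

variable [Fintype V]

theorem IsNClique.mem_image_insert_cliques_subset_neighbors (hS : G.IsNClique (n + 1) S)
    (hSA : S ⊆ A) (hu : u ∈ S) :
    S ∈ {T ∈ G.cliqueFinset n | T ⊆ {x ∈ A | G.Adj u x}}.image (insert u) := by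
  refine mem_image.2
    ⟨S.erase u, mem_filter.2 ⟨mem_cliqueFinset_iff.2 (hS.erase_of_mem hu), ?_⟩, insert_erase hu⟩
  intro x hx
  obtain ⟨hxu, hxS⟩ := mem_erase.1 hx
  exact mem_filter.2 ⟨hSA hxS, hS.isClique hu hxS (Ne.symm hxu)⟩

theorem card_cliques_subset_le_turanProd (r : ℕ) (A : Finset V)
    (hA : ∀ S ⊆ A, ¬ G.IsNClique (r + 1) S) :
    #{S ∈ G.cliqueFinset r | S ⊆ A} ≤ turanProd r #A := by
  induction r generalizing A with
  | zero =>
    calc #{S ∈ G.cliqueFinset 0 | S ⊆ A} ≤ #(G.cliqueFinset 0) := card_filter_le _ _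
      _ ≤ turanProd 0 #A := by simp [turanProd, card_le_one, mem_cliqueFinset_iff]
  | succ r ih =>
    rcases A.eq_empty_or_nonempty with rfl | hne
    · simp [filter_eq', mem_cliqueFinset_iff]
    obtain ⟨v, hvA, hmax⟩ := exists_max_image A (fun u => #{x ∈ A | G.Adj u x}) hne
    set N := fun u => {x ∈ A | G.Adj u x}
    have hcover : {S ∈ G.cliqueFinset (r + 1) | S ⊆ A} ⊆
        (A \ N v).biUnion fun u => {T ∈ G.cliqueFinset r | T ⊆ N u}.image (insert u) := by
      intro S hS
      obtain ⟨hclique, hSA⟩ := mem_filter.1 hS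
      rw [mem_cliqueFinset_iff] at hclique
      obtain ⟨u, huS, huN⟩ := not_subset.1 fun hSN =>
        not_isNClique_of_subset_neighbors hA hvA hSN hclique
      exact mem_biUnion.2 ⟨u, mem_sdiff.2 ⟨hSA huS, huN⟩,
        hclique.mem_image_insert_cliques_subset_neighbors hSA huS⟩
    have hlocal : ∀ u ∈ A \ N v,
        #({T ∈ G.cliqueFinset r | T ⊆ N u}.image (insert u)) ≤ turanProd r #(N v) := by
      intro u hu
      have huA := (mem_sdiff.1 hu).1
      exact card_image_le.trans <| (ih _ fun _ => not_isNClique_of_subset_neighbors hA huA).trans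
        (turanProd_mono r (hmax u huA))
    calc #{S ∈ G.cliqueFinset (r + 1) | S ⊆ A}
        ≤ ∑ u ∈ A \ N v, #({T ∈ G.cliqueFinset r | T ⊆ N u}.image (insert u)) :=
          (card_le_card hcover).trans card_biUnion_le
      _ ≤ #(A \ N v) * turanProd r #(N v) := by simpa using sum_le_sum hlocal
      _ ≤ turanProd (r + 1) (#(A \ N v) + #(N v)) := mul_turanProd_le _ _ _
      _ = turanProd (r + 1) #A := by rw [card_sdiff_add_card_eq_card (filter_subset _ _)]

theorem card_cliqueFinset_le_turanProd_of_cliqueFree_deleteEdges {a b : V} (hab : G.Adj a b)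
    {r : ℕ} (hfree : (G.deleteEdges {s(a, b)}).CliqueFree (r + 2)) :
    #(G.cliqueFinset (r + 2)) ≤ turanProd r (Fintype.card V - 2) := by
  set C : Finset V := {x ∈ {x | G.Adj a x} | G.Adj b x}
  have hcover : G.cliqueFinset (r + 2) ⊆
      ({T ∈ G.cliqueFinset r | T ⊆ C}.image (insert b)).image (insert a) := by
    intro S hS
    rw [mem_cliqueFinset_iff] at hS
    obtain ⟨haS, hbS⟩ := hS.mem_of_cliqueFree_deleteEdges hfree
    obtain ⟨T, hT, rfl⟩ :=
      mem_image.1 (hS.mem_image_insert_cliques_subset_neighbors (subset_univ S) haS)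
    obtain ⟨hT, hTN⟩ := mem_filter.1 hT
    have hbT : b ∈ T := (mem_insert.1 hbS).resolve_left hab.ne'
    exact mem_image_of_mem _
      ((mem_cliqueFinset_iff.1 hT).mem_image_insert_cliques_subset_neighbors hTN hbT)
  have hCfree : ∀ T ⊆ C, ¬ G.IsNClique (r + 1) T := fun T hTC hT => by
    have hbT : b ∉ insert a T := by
      simpa [hab.ne'] using fun hbT => G.irrefl (mem_filter.1 (hTC hbT)).2
    exact hfree _ ((hT.insert fun x hx => (mem_filter.1 (mem_filter.1 (hTC hx)).1).2)
      |>.deleteEdges_of_notMem hbT)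
  have hC : #C ≤ Fintype.card V - 2 := by
    calc #C ≤ #(univ \ {a, b}) := card_le_card fun x hx => by
          simp only [C, mem_filter, mem_univ, true_and] at hx
          simp [hx.1.ne', hx.2.ne']
      _ = Fintype.card V - 2 := by rw [card_univ_sdiff, card_pair hab.ne]
  calc #(G.cliqueFinset (r + 2)) ≤ #{T ∈ G.cliqueFinset r | T ⊆ C} :=
        (card_le_card hcover).trans (card_image_le.trans card_image_le)
    _ ≤ turanProd r #C := card_cliques_subset_le_turanProd r C hCfree
    _ ≤ turanProd r (Fintype.card V - 2) := turanProd_mono r hC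

end SimpleGraph

open SimpleGraph

/-- If a graph `H` on at least `s` vertices contains exactly `t` copies of `K_s`
and some edge `e` such that `H - e` has no copy of `K_s`, then
`t ≤ ∏_{j=0}^{s-3} ⌈(|V(H)| - 2 - j)/(s-2)⌉`. -/
theorem stmt_3 {V : Type*} [Fintype V] (s t : ℕ) (hs : 3 ≤ s)
    (H : SimpleGraph V) (hV : s ≤ Fintype.card V)
    (ht : t = {S : Finset V | S.card = s ∧ H.IsClique (S : Set V)}.ncard)
    (e : Sym2 V) (he : e ∈ H.edgeSet)
    (hdel : {S : Finset V | S.card = s ∧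
      (H.deleteEdges {e}).IsClique (S : Set V)} = ∅) :
    (t : ℤ) ≤ ∏ j ∈ Finset.range (s - 2),
      ⌈((Fintype.card V : ℚ) - 2 - j) / ((s : ℚ) - 2)⌉ := by
  classical
  induction e using Sym2.ind with | _ a b => ?_
  obtain ⟨r, rfl⟩ : ∃ r, s = r + 2 := ⟨s - 2, by omega⟩
  have hfree : (H.deleteEdges {s(a, b)}).CliqueFree (r + 2) := fun S hS =>
    Set.eq_empty_iff_forall_notMem.1 hdel S ⟨hS.card_eq, hS.isClique⟩
  have hcount : t = #(H.cliqueFinset (r + 2)) := by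
    rw [ht, ← Set.ncard_coe_finset]
    congr
    ext S
    simp [mem_cliqueFinset_iff, isNClique_iff, and_comm]
  have hprod : ∏ j ∈ range (r + 2 - 2),
      ⌈((Fintype.card V : ℚ) - 2 - j) / ((↑(r + 2) : ℚ) - 2)⌉ =
        turanProd r (Fintype.card V - 2) := by
    rw [← prod_range_ceil_div_eq_turanProd, Nat.cast_sub (by omega)]
    push_cast
    simp only [add_sub_cancel_right]
  rw [hcount, hprod]
  exact_mod_cast card_cliqueFinset_le_turanProd_of_cliqueFree_deleteEdges he hfree
end

section
/- Let s ≥ 3 and n ≥ s. There exists a graph H on n vertices with an edge e such that H − e contains no copy of K_s, and H contains exactly ∏_{j=0}^{s-3} ⌈(n − 2 − j)/(s-2)⌉ distinct copies of K_s. -/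
/-!
Colour the vertices by `Fin 2 ⊕ Fin (s - 2)`: vertices `0` and `1` get singleton colour classes
and vertex `2 + i` gets the colour `i mod (s - 2)`; `H` is the complete multipartite graph on the
colour classes. An `s`-clique of `H` is exactly a transversal of the colouring, so there are
`∏ |class|` of them, and each contains both `0` and `1`, hence the edge `01`. The class of residue
`j` has `⌈(n - 2 - j)/(s - 2)⌉` elements.
-/

open Finset SimpleGraph

section Transversal

variable {V β : Type*} [Fintype β] [DecidableEq β]

theorem image_eq_univ_of_card_eq_of_injOn {p : V → β} {S : Finset V} (hS : #S = Fintype.card β)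
    (hp : Set.InjOn p S) : S.image p = univ :=
  eq_univ_of_card _ (by rw [card_image_of_injOn hp, hS])

theorem mem_of_injOn_of_card_eq {p : V → β} {S : Finset V} (hS : #S = Fintype.card β)
    (hp : Set.InjOn p S) {u : V} (hu : ∀ v, p v = p u → v = u) : u ∈ S := by
  obtain ⟨v, hv, hvu⟩ := mem_image.1 (image_eq_univ_of_card_eq_of_injOn hS hp ▸ mem_univ (p u))
  exact hu v hvu ▸ hv

/-- The sets meeting every fibre of `p` exactly once correspond to the sections of `p`. -/
theorem card_filter_injOn_eq_prod [Fintype V] [DecidableEq V] (p : V → β) :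
    #{S : Finset V | #S = Fintype.card β ∧ Set.InjOn p S} = ∏ b, #{v | p v = b} := by
  rw [← Fintype.card_piFinset]
  symm
  refine card_bij (fun g _ => univ.image g) ?_ ?_ ?_
  · intro g hg
    simp only [Fintype.mem_piFinset, mem_filter, mem_univ, true_and] at hg
    have hinj : Function.Injective g := Function.LeftInverse.injective hg
    refine mem_filter.2 ⟨mem_univ _, by rw [card_image_of_injective _ hinj, card_univ], ?_⟩
    rw [coe_image, coe_univ, Set.image_univ]
    rintro _ ⟨a, rfl⟩ _ ⟨b, rfl⟩ h
    rw [hg a, hg b] at h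
    exact congrArg g h
  · intro g₁ hg₁ g₂ hg₂ h
    simp only [Fintype.mem_piFinset, mem_filter, mem_univ, true_and] at hg₁ hg₂
    funext b
    obtain ⟨c, -, hc⟩ := mem_image.1 (h ▸ mem_image_of_mem g₁ (mem_univ b))
    have hcb : c = b := by rw [← hg₂ c, hc, hg₁ b]
    rw [← hc, hcb]
  · intro S hS
    simp only [mem_filter, mem_univ, true_and] at hS
    obtain ⟨hcard, hp⟩ := hS
    have hsurj (b : β) : ∃ v ∈ S, p v = b :=
      mem_image.1 (image_eq_univ_of_card_eq_of_injOn hcard hp ▸ mem_univ b)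
    choose g hgS hgp using hsurj
    refine ⟨g, Fintype.mem_piFinset.2 fun b => by simp [hgp], ?_⟩
    refine eq_of_subset_of_card_le (image_subset_iff.2 fun b _ => hgS b) ?_
    rw [hcard, card_image_of_injective _ (Function.LeftInverse.injective hgp), card_univ]

end Transversal

section CompleteMultipartite

variable {V β : Type*}

theorem isClique_comap_top_iff {p : V → β} {s : Set V} :
    ((⊤ : SimpleGraph β).comap p).IsClique s ↔ Set.InjOn p s := by
  rw [Set.injOn_iff_pairwise_ne]
  exact Iff.rfl

variable [Fintype β] [DecidableEq β]

theorem ncard_isClique_comap_top [Fintype V] [DecidableEq V] (p : V → β) :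
    {S : Finset V | #S = Fintype.card β ∧ ((⊤ : SimpleGraph β).comap p).IsClique (S : Set V)}.ncard
      = ∏ b, #{v | p v = b} := by
  simp_rw [isClique_comap_top_iff]
  rw [← card_filter_injOn_eq_prod, ← Set.ncard_coe_finset, coe_filter]
  simp

theorem not_isClique_deleteEdges_comap_top {p : V → β} {u v : V} (huv : p u ≠ p v)
    (hu : ∀ w, p w = p u → w = u) (hv : ∀ w, p w = p v → w = v) {S : Finset V}
    (hS : #S = Fintype.card β) :
    ¬ (((⊤ : SimpleGraph β).comap p).deleteEdges {s(u, v)}).IsClique (S : Set V) := by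
  intro hclique
  have hinj := isClique_comap_top_iff.1 (hclique.mono (deleteEdges_le _))
  have hadj := hclique (mem_of_injOn_of_card_eq hS hinj hu) (mem_of_injOn_of_card_eq hS hinj hv)
    (ne_of_apply_ne p huv)
  exact (deleteEdges_adj.1 hadj).2 rfl

end CompleteMultipartite

theorem Fin.card_filter_val_eq_count (m : ℕ) (q : ℕ → Prop) [DecidablePred q] :
    #{i : Fin m | q i} = m.count q := by
  rw [Nat.count_eq_card_filter_range]
  refine card_bij (fun i _ => i.val) (by simp) (fun _ _ _ _ => Fin.ext) fun x hx => ?_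
  rw [mem_filter, mem_range] at hx
  exact ⟨⟨x, hx.1⟩, by simpa using hx.2, rfl⟩

def residueColoring (k m : ℕ) [NeZero k] : Fin (2 + m) → Fin 2 ⊕ Fin k :=
  Fin.addCases Sum.inl fun i => Sum.inr (Fin.ofNat k i)

section residueColoring

variable {k m : ℕ} [NeZero k]

@[simp]
theorem residueColoring_castAdd (i : Fin 2) : residueColoring k m (Fin.castAdd m i) = .inl i := by
  simp [residueColoring]

theorem residueColoring_eq_inl_iff {v : Fin (2 + m)} {i : Fin 2} :
    residueColoring k m v = .inl i ↔ v = Fin.castAdd m i := by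
  induction v using Fin.addCases <;> simp [residueColoring, Fin.ext_iff]
  omega

theorem card_residueColoring_fiber_inr (j : Fin k) :
    #{v | residueColoring k m v = .inr j} = m.count (· ≡ j [MOD k]) := by
  have hfiber : ({v | residueColoring k m v = .inr j} : Finset (Fin (2 + m))) =
      ({i | (i : ℕ) ≡ j [MOD k]} : Finset (Fin m)).map (Fin.natAddEmb 2) := by
    ext v
    simp only [mem_filter, mem_univ, true_and, mem_map]
    induction v using Fin.addCases
    · simp [residueColoring, Fin.ext_iff]
      omega
    · simp [residueColoring, Nat.ModEq, Nat.mod_eq_of_lt j.isLt, Fin.ext_iff (n := k),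
        Fin.val_natCast]
  rw [hfiber, card_map]
  exact Fin.card_filter_val_eq_count m (· ≡ j [MOD k])

theorem prod_card_residueColoring_fiber :
    ((∏ b, #{v | residueColoring k m v = b} : ℕ) : ℤ) = ∏ j : Fin k, ⌈((m : ℚ) - j) / k⌉ := by
  have hinl (i : Fin 2) : #{v | residueColoring k m v = .inl i} = 1 := by
    simp only [residueColoring_eq_inl_iff, filter_eq', mem_univ, if_true, card_singleton]
  simp only [Fintype.prod_sum_type, hinl, prod_const_one, one_mul, card_residueColoring_fiber_inr,
    Nat.cast_prod]
  refine prod_congr rfl fun j _ => ?_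
  rw [Nat.count_modEq_card_eq_ceil _ (Nat.pos_of_neZero k), Nat.mod_eq_of_lt j.isLt]

end residueColoring

/-- For `s ≥ 3` and `n ≥ s` there is a graph `H` on `n` vertices with an edge `e`
such that `H - e` has no copy of `K_s` while `H` has exactly
`∏_{j=0}^{s-3} ⌈(n - 2 - j)/(s-2)⌉` copies of `K_s`. -/
theorem stmt_4 (s n : ℕ) (hs : 3 ≤ s) (hn : s ≤ n) :
    ∃ (H : SimpleGraph (Fin n)) (e : Sym2 (Fin n)), e ∈ H.edgeSet ∧
      {S : Finset (Fin n) | S.card = s ∧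
        (H.deleteEdges {e}).IsClique (S : Set (Fin n))} = ∅ ∧
      ({S : Finset (Fin n) | S.card = s ∧ H.IsClique (S : Set (Fin n))}.ncard : ℤ) =
        ∏ j ∈ Finset.range (s - 2), ⌈((n : ℚ) - 2 - j) / ((s : ℚ) - 2)⌉ := by
  obtain ⟨k, rfl⟩ : ∃ k, s = 2 + k := ⟨s - 2, by omega⟩
  obtain ⟨m, rfl⟩ : ∃ m, n = 2 + m := ⟨n - 2, by omega⟩
  have : NeZero k := ⟨by omega⟩
  have hcard : Fintype.card (Fin 2 ⊕ Fin k) = 2 + k := by simp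
  have hfiber (i : Fin 2) (w : Fin (2 + m)) :
      residueColoring k m w = residueColoring k m (Fin.castAdd m i) → w = Fin.castAdd m i :=
    fun h => residueColoring_eq_inl_iff.1 (h.trans (residueColoring_castAdd i))
  refine ⟨(⊤ : SimpleGraph _).comap (residueColoring k m), s(Fin.castAdd m 0, Fin.castAdd m 1),
    by simp, ?_, ?_⟩
  · refine Set.eq_empty_of_forall_notMem fun S ⟨hS, hclique⟩ => ?_
    exact not_isClique_deleteEdges_comap_top (by simp) (hfiber 0) (hfiber 1)
      (hS.trans hcard.symm) hclique
  · rw [← hcard, ncard_isClique_comap_top, hcard, prod_card_residueColoring_fiber,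
      Nat.add_sub_cancel_left, ← Fin.prod_univ_eq_prod_range]
    refine prod_congr rfl fun j _ => congr_arg _ ?_
    push_cast
    ring
end

section
/- In any 2-coloring of K_n − e (n = R(s,s)) that contains no monochromatic K_s, if G_1 and G_2 denote, for each of the two colors, the subgraph formed by the vertices (and edges of that color among them) of all monochromatic copies of K_s created by coloring the missing edge e in that color, then ||V(G_1)| − |V(G_2)|| < R(s−1, s) − (s−2). -/
def RamseyProp (n k : ℕ) (s : Fin k → ℕ) : Prop :=
  ∀ c : Sym2 (Fin n) → Fin k, ∃ (i : Fin k) (S : Finset (Fin n)),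
    S.card = s i ∧ ∀ x ∈ S, ∀ y ∈ S, x ≠ y → c s(x, y) = i

noncomputable def ramseyNumber (k : ℕ) (s : Fin k → ℕ) : ℕ :=
  sInf {n | RamseyProp n k s}

/-- For a `2`-coloring of `K_{R(s,s)} - e` with no monochromatic `K_s`, the
vertex sets `V i` of the unions of monochromatic copies of `K_s` created by
coloring the missing edge in color `i` satisfy
`||V 0| - |V 1|| < R(s-1, s) - (s - 2)`. -/
theorem stmt_7 (s : ℕ) (hs : 3 ≤ s) (n : ℕ) (hn : n = ramseyNumber 2 ![s, s])
    (v₁ v₂ : Fin n) (hv : v₁ ≠ v₂) (c : Sym2 (Fin n) → Fin 2)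
    (hfree : ¬ ∃ (i : Fin 2) (S : Finset (Fin n)), S.card = s ∧
      ∀ x ∈ S, ∀ y ∈ S, x ≠ y → s(x, y) ≠ s(v₁, v₂) ∧ c s(x, y) = i)
    (V : Fin 2 → Set (Fin n))
    (hV : ∀ i, V i = {w | ∃ S : Finset (Fin n), S.card = s ∧ v₁ ∈ S ∧ v₂ ∈ S ∧
      (∀ x ∈ S, ∀ y ∈ S, x ≠ y → s(x, y) ≠ s(v₁, v₂) → c s(x, y) = i) ∧ w ∈ S}) :
    |((V 0).ncard : ℤ) - ((V 1).ncard : ℤ)| <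
      (ramseyNumber 2 ![s - 1, s] : ℤ) - ((s : ℤ) - 2) := by
  classical
  have hn0 : 0 < n := v₁.pos
  -- n satisfies the Ramsey property for ![s, s]
  have hRn : RamseyProp n 2 ![s, s] := by
    have hne : {k | RamseyProp k 2 ![s, s]}.Nonempty := by
      by_contra h
      rw [Set.not_nonempty_iff_eq_empty] at h
      have h2 := hn
      rw [ramseyNumber, h, Nat.sInf_empty] at h2
      omega
    have h3 := Nat.sInf_mem hne
    rw [hn, ramseyNumber]
    exact h3
  -- hence n satisfies the Ramsey property for ![s - 1, s]
  have hRn' : RamseyProp n 2 ![s - 1, s] := by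
    intro d
    obtain ⟨j, S, hScard, hSmono⟩ := hRn d
    have hle : ![s - 1, s] j ≤ S.card := by
      rw [hScard]; fin_cases j <;> simp
    obtain ⟨T, hTS, hTcard⟩ := Finset.exists_subset_card_eq hle
    exact ⟨j, T, hTcard, fun x hx y hy hxy => hSmono x (hTS hx) y (hTS hy) hxy⟩
  set m := ramseyNumber 2 ![s - 1, s] with hm
  have hRm : RamseyProp m 2 ![s - 1, s] := by
    have hne : {k | RamseyProp k 2 ![s - 1, s]}.Nonempty := ⟨n, hRn'⟩
    have h3 := Nat.sInf_mem hne
    rw [hm, ramseyNumber]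
    exact h3
  -- lower bound: each V i contains a copy of K_s through v₁, v₂
  have hlow : ∀ i : Fin 2, ∃ S : Finset (Fin n), S.card = s ∧ v₁ ∈ S ∧ v₂ ∈ S ∧
      ∀ x ∈ S, ∀ y ∈ S, x ≠ y → s(x, y) ≠ s(v₁, v₂) → c s(x, y) = i := by
    intro i
    set c' : Sym2 (Fin n) → Fin 2 := fun p => if p = s(v₁, v₂) then i else c p with hc'
    obtain ⟨j, S, hScard, hSmono⟩ := hRn c'
    have hScard' : S.card = s := by rw [hScard]; fin_cases j <;> simp
    by_cases hvS : v₁ ∈ S ∧ v₂ ∈ S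
    · have hji : j = i := by
        have h1 := hSmono v₁ hvS.1 v₂ hvS.2 hv
        simp only [hc', if_pos rfl] at h1
        exact h1.symm
      refine ⟨S, hScard', hvS.1, hvS.2, fun x hx y hy hxy hne => ?_⟩
      have h1 := hSmono x hx y hy hxy
      simp only [hc', if_neg hne] at h1
      rw [h1, hji]
    · exfalso
      apply hfree
      refine ⟨j, S, hScard', fun x hx y hy hxy => ?_⟩
      have hne : s(x, y) ≠ s(v₁, v₂) := by
        intro h
        rw [Sym2.eq_iff] at h
        rcases h with ⟨rfl, rfl⟩ | ⟨rfl, rfl⟩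
        · exact hvS ⟨hx, hy⟩
        · exact hvS ⟨hy, hx⟩
      have h1 := hSmono x hx y hy hxy
      simp only [hc', if_neg hne] at h1
      exact ⟨hne, h1⟩
  -- consequences: memberships and cardinality lower bounds
  have hmemV : ∀ i : Fin 2, v₁ ∈ V i ∧ v₂ ∈ V i ∧ s ≤ (V i).ncard := by
    intro i
    obtain ⟨S, hScard, h1, h2, hmono⟩ := hlow i
    have hsub : ↑S ⊆ V i := by
      intro w hw
      rw [hV i]
      exact ⟨S, hScard, h1, h2, hmono, by simpa using hw⟩
    refine ⟨hsub (by simpa using h1), hsub (by simpa using h2), ?_⟩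
    calc s = (↑S : Set (Fin n)).ncard := by rw [Set.ncard_coe_finset, hScard]
    _ ≤ _ := Set.ncard_le_ncard hsub (Set.toFinite _)
  -- edges from v₁ and v₂ to V i have color i
  have hedge : ∀ i : Fin 2, ∀ w ∈ V i, w ≠ v₁ → w ≠ v₂ →
      c s(v₁, w) = i ∧ c s(v₂, w) = i := by
    intro i w hw h1 h2
    rw [hV i] at hw
    obtain ⟨S, hScard, hv1, hv2, hmono, hwS⟩ := hw
    constructor
    · refine hmono v₁ hv1 w hwS (Ne.symm h1) ?_
      simp [Sym2.eq_iff, h2, hv]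
    · refine hmono v₂ hv2 w hwS (Ne.symm h2) ?_
      simp [Sym2.eq_iff, h1, Ne.symm hv]
  -- upper bound: |V i| ≤ m + 1
  have hupper : ∀ i : Fin 2, (V i).ncard ≤ m + 1 := by
    intro i
    by_contra hcon
    push_neg at hcon
    set F : Finset (Fin n) := (V i).toFinset \ {v₁, v₂} with hF
    have hFcard : m ≤ F.card := by
      have h1 : (V i).toFinset.card = (V i).ncard := (Set.ncard_eq_toFinset_card' _).symm
      have h2 : (V i).toFinset.card ≤ F.card + ({v₁, v₂} : Finset (Fin n)).card := by
        rw [hF]; exact Finset.card_le_card_sdiff_add_card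
      have h3 : ({v₁, v₂} : Finset (Fin n)).card ≤ 2 := by
        apply le_trans (Finset.card_insert_le _ _); simp
      omega
    obtain ⟨T, hTF, hTcard⟩ := Finset.exists_subset_card_eq hFcard
    have hTV : ∀ w ∈ T, w ∈ V i ∧ w ≠ v₁ ∧ w ≠ v₂ := by
      intro w hw
      have h1 := hTF hw
      rw [hF, Finset.mem_sdiff, Set.mem_toFinset, Finset.mem_insert, Finset.mem_singleton] at h1
      push_neg at h1
      exact ⟨h1.1, h1.2.1, h1.2.2⟩
    set f : Fin m → Fin n := fun a => (T.orderIsoOfFin hTcard a : Fin n) with hf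
    have hfinj : Function.Injective f := fun a b hab =>
      (T.orderIsoOfFin hTcard).injective (Subtype.ext hab)
    have hfT : ∀ a, f a ∈ T := fun a => (T.orderIsoOfFin hTcard a).2
    set d : Sym2 (Fin m) → Fin 2 := fun p => if c (Sym2.map f p) = i then 0 else 1 with hd
    obtain ⟨j, S, hScard, hSmono⟩ := hRm d
    have hdval : ∀ a ∈ S, ∀ b ∈ S, a ≠ b →
        (if c s(f a, f b) = i then (0 : Fin 2) else 1) = j := by
      intro a ha b hb hab
      have h1 := hSmono a ha b hb hab
      simp only [hd, Sym2.map_pair_eq] at h1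
      exact h1
    set S' : Finset (Fin n) := S.image f with hS'
    have hS'prop : ∀ w ∈ S', w ∈ V i ∧ w ≠ v₁ ∧ w ≠ v₂ := by
      intro w hw
      rw [hS', Finset.mem_image] at hw
      obtain ⟨a, _, rfl⟩ := hw
      exact hTV _ (hfT a)
    have hS'card : S'.card = S.card := Finset.card_image_of_injective _ hfinj
    have hS'mono : ∀ x ∈ S', ∀ y ∈ S', x ≠ y →
        (if c s(x, y) = i then (0 : Fin 2) else 1) = j := by
      intro x hx y hy hxy
      rw [hS', Finset.mem_image] at hx hy
      obtain ⟨a, ha, rfl⟩ := hx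
      obtain ⟨b, hb, rfl⟩ := hy
      exact hdval a ha b hb (fun h => hxy (by rw [h]))
    fin_cases j
    · -- a color-i clique of size s - 1 inside V i \ {v₁, v₂}; add v₁
      have hScard0 : S.card = s - 1 := by simpa using hScard
      have hv1S' : v₁ ∉ S' := fun h => (hS'prop _ h).2.1 rfl
      apply hfree
      refine ⟨i, insert v₁ S', ?_, ?_⟩
      · rw [Finset.card_insert_of_notMem hv1S', hS'card, hScard0]; omega
      · intro x hx y hy hxy
        rcases Finset.mem_insert.mp hx with rfl | hx'
        · rcases Finset.mem_insert.mp hy with rfl | hy'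
          · exact absurd rfl hxy
          · obtain ⟨hyV, hy1, hy2⟩ := hS'prop y hy'
            refine ⟨by simp [Sym2.eq_iff, hy2, hv], (hedge i y hyV hy1 hy2).1⟩
        · rcases Finset.mem_insert.mp hy with rfl | hy'
          · obtain ⟨hxV, hx1, hx2⟩ := hS'prop x hx'
            refine ⟨by simp [Sym2.eq_iff, hx1, hx2], ?_⟩
            rw [Sym2.eq_swap]
            exact (hedge i x hxV hx1 hx2).1
          · obtain ⟨hxV, hx1, hx2⟩ := hS'prop x hx'
            obtain ⟨hyV, hy1, hy2⟩ := hS'prop y hy'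
            refine ⟨by simp [Sym2.eq_iff, hx1, hx2, hy1, hy2], ?_⟩
            have h1 := hS'mono x hx' y hy' hxy
            by_cases hc : c s(x, y) = i
            · exact hc
            · rw [if_neg hc] at h1; exact absurd h1 (by decide)
    · -- a clique of size s in the other color, avoiding v₁, v₂
      have hScard1 : S.card = s := by simpa using hScard
      apply hfree
      refine ⟨if i = 0 then 1 else 0, S', by rw [hS'card, hScard1], ?_⟩
      intro x hx y hy hxy
      obtain ⟨hxV, hx1, hx2⟩ := hS'prop x hx
      obtain ⟨hyV, hy1, hy2⟩ := hS'prop y hy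
      refine ⟨by simp [Sym2.eq_iff, hx1, hx2, hy1, hy2], ?_⟩
      have h1 := hS'mono x hx y hy hxy
      have hc : c s(x, y) ≠ i := by
        intro hc
        rw [if_pos hc] at h1
        exact absurd h1 (by decide)
      revert hc
      generalize c s(x, y) = a
      fin_cases a <;> fin_cases i <;> simp
  -- conclude
  have h0 := hmemV 0
  have h1 := hmemV 1
  have u0 := hupper 0
  have u1 := hupper 1
  rw [abs_sub_lt_iff]
  constructor <;> omega
end

section
/- Every 2-coloring of the edges of K_6 contains at least 2 monochromatic triangles. -/
set_option maxHeartbeats 8000000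

lemma tri_iff (c : Sym2 (Fin 6) → Fin 2) (x y z : Fin 6) (hxy : x ≠ y) (hxz : x ≠ z)
    (hyz : y ≠ z) :
    (({x, y, z} : Finset (Fin 6)).card = 3 ∧ ∃ i : Fin 2,
      ∀ a ∈ ({x, y, z} : Finset (Fin 6)), ∀ b ∈ ({x, y, z} : Finset (Fin 6)),
        a ≠ b → c s(a, b) = i) ↔
    (c s(x, y) = c s(x, z) ∧ c s(x, y) = c s(y, z)) := by
  have hsw : ∀ a b : Fin 6, c s(a, b) = c s(b, a) := fun a b => by rw [Sym2.eq_swap]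
  constructor
  · rintro ⟨-, i, h⟩
    have h1 := h x (by simp) y (by simp) hxy
    have h2 := h x (by simp) z (by simp) hxz
    have h3 := h y (by simp) z (by simp) hyz
    exact ⟨h1.trans h2.symm, h1.trans h3.symm⟩
  · rintro ⟨h1, h2⟩
    refine ⟨Finset.card_eq_three.mpr ⟨x, y, z, hxy, hxz, hyz, rfl⟩, c s(x, y), ?_⟩
    intro a ha b hb hab
    simp only [Finset.mem_insert, Finset.mem_singleton] at ha hb
    rcases ha with rfl | rfl | rfl <;> rcases hb with rfl | rfl | rfl <;>
      first
        | exact absurd rfl hab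
        | rfl
        | exact hsw _ _
        | exact h1.symm
        | exact h2.symm
        | exact h1
        | exact h2
        | (rw [hsw]; first | exact h1.symm | exact h2.symm)

def triL : List (Finset (Fin 6)) := [{0,1,2},{0,1,3},{0,1,4},{0,1,5},{0,2,3},{0,2,4},{0,2,5},{0,3,4},{0,3,5},{0,4,5},{1,2,3},{1,2,4},{1,2,5},{1,3,4},{1,3,5},{1,4,5},{2,3,4},{2,3,5},{2,4,5},{3,4,5}]

def T20 : Finset (Finset (Fin 6)) := ⟨↑triL, by decide⟩

lemma sum_mk' {α : Type*} (l : List α) (h) (f : α → ℕ) :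
    (⟨↑l, h⟩ : Finset α).sum f = (l.map f).sum := rfl

/-- Every `2`-coloring of the edges of `K_6` contains at least `2`
monochromatic triangles. -/
theorem stmt_10 (c : Sym2 (Fin 6) → Fin 2) :
    2 ≤ {S : Finset (Fin 6) | S.card = 3 ∧ ∃ i : Fin 2,
      ∀ x ∈ S, ∀ y ∈ S, x ≠ y → c s(x, y) = i}.ncard := by
  set P : Finset (Fin 6) → Prop := fun S => S.card = 3 ∧ ∃ i : Fin 2,
      ∀ x ∈ S, ∀ y ∈ S, x ≠ y → c s(x, y) = i with hP
  have hset : {S : Finset (Fin 6) | P S} = ↑(Finset.univ.filter P) := by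
    ext S; simp
  rw [hset, Set.ncard_coe_finset]
  have hmem : ∀ S : Finset (Fin 6), S.card = 3 → S ∈ T20 := by decide
  have hT : Finset.univ.filter P = T20.filter P := by
    ext S
    simp only [Finset.mem_filter, Finset.mem_univ, true_and]
    exact ⟨fun h => ⟨hmem S h.1, h⟩, fun h => h.2⟩
  rw [hT, Finset.card_filter]
  unfold T20
  rw [sum_mk']
  simp only [triL, List.map_cons, List.map_nil, List.sum_cons, List.sum_nil, hP]
  simp only [tri_iff c 0 1 2 (by decide) (by decide) (by decide)]
  simp only [tri_iff c 0 1 3 (by decide) (by decide) (by decide)]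
  simp only [tri_iff c 0 1 4 (by decide) (by decide) (by decide)]
  simp only [tri_iff c 0 1 5 (by decide) (by decide) (by decide)]
  simp only [tri_iff c 0 2 3 (by decide) (by decide) (by decide)]
  simp only [tri_iff c 0 2 4 (by decide) (by decide) (by decide)]
  simp only [tri_iff c 0 2 5 (by decide) (by decide) (by decide)]
  simp only [tri_iff c 0 3 4 (by decide) (by decide) (by decide)]
  simp only [tri_iff c 0 3 5 (by decide) (by decide) (by decide)]
  simp only [tri_iff c 0 4 5 (by decide) (by decide) (by decide)]
  simp only [tri_iff c 1 2 3 (by decide) (by decide) (by decide)]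
  simp only [tri_iff c 1 2 4 (by decide) (by decide) (by decide)]
  simp only [tri_iff c 1 2 5 (by decide) (by decide) (by decide)]
  simp only [tri_iff c 1 3 4 (by decide) (by decide) (by decide)]
  simp only [tri_iff c 1 3 5 (by decide) (by decide) (by decide)]
  simp only [tri_iff c 1 4 5 (by decide) (by decide) (by decide)]
  simp only [tri_iff c 2 3 4 (by decide) (by decide) (by decide)]
  simp only [tri_iff c 2 3 5 (by decide) (by decide) (by decide)]
  simp only [tri_iff c 2 4 5 (by decide) (by decide) (by decide)]
  simp only [tri_iff c 3 4 5 (by decide) (by decide) (by decide)]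
  generalize c s(0, 1) = e01
  generalize c s(0, 2) = e02
  generalize c s(0, 3) = e03
  generalize c s(0, 4) = e04
  generalize c s(0, 5) = e05
  generalize c s(1, 2) = e12
  generalize c s(1, 3) = e13
  generalize c s(1, 4) = e14
  generalize c s(1, 5) = e15
  generalize c s(2, 3) = e23
  generalize c s(2, 4) = e24
  generalize c s(2, 5) = e25
  generalize c s(3, 4) = e34
  generalize c s(3, 5) = e35
  generalize c s(4, 5) = e45
  revert e01 e02 e03 e04 e05 e12 e13 e14 e15 e23 e24 e25 e34 e35 e45
  decide
end

section
/- Let s ≥ 3 and let H be a graph in which every copy of K_s contains two fixed adjacent vertices u and v, and suppose every vertex of H other than u,v lies in some copy of K_s. If t is the number of copies of K_s in H, then t ≤ ((|V(H)|−2)/(s−2))^{s−2}. -/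
/-!
Every copy of `K_s` is `{u, v}` together with an `(s - 2)`-clique of `H - u - v`, and `H - u - v`
has no `(s - 1)`-clique, since `u` is adjacent to all other vertices while `v` lies in every copy
of `K_s`. It remains to show that a `K_{r+1}`-free graph on `n` vertices has at most `(n / r) ^ r`
cliques of size `r`. Weight the vertices by `x ≥ 0` and consider `∑_S ∏_{v ∈ S} x v` over the
`r`-cliques `S`. For nonadjacent `a, b` no clique contains both, so this is affine in `x a` and in
`x b` with no mixed term; moving the whole weight of one of them onto the other (Zykov
symmetrisation) does not decrease it. Repeating until the support of `x` is a clique leaves a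
single clique, where AM-GM gives the bound `(∑ x / r) ^ r`; finally take `x ≡ 1`.
-/

open Finset Function SimpleGraph

theorem Real.prod_le_mean_pow {ι : Type*} (s : Finset ι) {x : ι → ℝ} (hx : ∀ i ∈ s, 0 ≤ x i) :
    ∏ i ∈ s, x i ≤ ((∑ i ∈ s, x i) / #s) ^ #s := by
  rcases s.eq_empty_or_nonempty with rfl | hs
  · simp
  have h := Real.geom_mean_le_arith_mean s (fun _ => 1) x (fun _ _ => zero_le_one)
    (by simpa using hs) hx
  simp only [Real.rpow_one, sum_const, nsmul_eq_mul, mul_one, one_mul] at h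
  calc ∏ i ∈ s, x i = ((∏ i ∈ s, x i) ^ ((#s : ℝ)⁻¹)) ^ #s :=
        (Real.rpow_inv_natCast_pow (prod_nonneg hx) hs.card_pos.ne').symm
    _ ≤ _ := by gcongr; exact Real.rpow_nonneg (prod_nonneg hx) _

namespace SimpleGraph

theorem IsClique.card_le_of_cliqueFree {V : Type*} {G : SimpleGraph V} {r : ℕ}
    (hG : G.CliqueFree (r + 1)) {T : Finset V} (hT : G.IsClique (T : Set V)) : #T ≤ r := by
  by_contra! h
  exact hG.mono h T ⟨hT, rfl⟩

section CliqueWeight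

variable {V : Type*} [Fintype V] [DecidableEq V] (G : SimpleGraph V) [DecidableRel G.Adj] (r : ℕ)

def cliqueWeight (x : V → ℝ) : ℝ := ∑ S ∈ G.cliqueFinset r, ∏ v ∈ S, x v

/-- The partial derivative of `cliqueWeight G r x` with respect to `x a`. -/
def linkWeight (x : V → ℝ) (a : V) : ℝ := ∑ S ∈ G.cliqueFinset r with a ∈ S, ∏ v ∈ S.erase a, x v

variable {G r} {a b : V}

theorem cliqueWeight_eq_of_not_adj (hab : a ≠ b) (hnadj : ¬ G.Adj a b) (x : V → ℝ) :
    G.cliqueWeight r x = x a * G.linkWeight r x a + x b * G.linkWeight r x b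
      + ∑ S ∈ G.cliqueFinset r with a ∉ S ∧ b ∉ S, ∏ v ∈ S, x v := by
  have hlink : ∀ c, ∑ S ∈ G.cliqueFinset r with c ∈ S, ∏ v ∈ S, x v = x c * G.linkWeight r x c :=
    fun c => by
      rw [linkWeight, mul_sum]
      exact sum_congr rfl fun S hS => (mul_prod_erase S x (mem_filter.1 hS).2).symm
  have hb : (G.cliqueFinset r).filter (fun S => a ∉ S ∧ b ∈ S)
      = (G.cliqueFinset r).filter (fun S => b ∈ S) :=
    filter_congr fun S hS => ⟨And.right, fun hbS => ⟨fun haS =>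
      hnadj ((mem_cliqueFinset_iff.1 hS).isClique haS hbS hab), hbS⟩⟩
  rw [cliqueWeight, ← sum_filter_add_sum_filter_not _ (a ∈ ·),
    ← sum_filter_add_sum_filter_not ((G.cliqueFinset r).filter (a ∉ ·)) (b ∈ ·), filter_filter,
    filter_filter, hb, hlink, hlink, add_assoc]

theorem linkWeight_congr (hnadj : ¬ G.Adj a b) {x y : V → ℝ}
    (h : ∀ v, v ≠ a → v ≠ b → x v = y v) : G.linkWeight r x a = G.linkWeight r y a := by
  refine sum_congr rfl fun S hS => prod_congr rfl fun v hv => h v (ne_of_mem_erase hv) ?_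
  rintro rfl
  obtain ⟨hS, haS⟩ := mem_filter.1 hS
  exact hnadj ((mem_cliqueFinset_iff.1 hS).isClique haS (mem_of_mem_erase hv)
    (ne_of_mem_erase hv).symm)

theorem cliqueWeight_le_update (hab : a ≠ b) (hnadj : ¬ G.Adj a b) (x : V → ℝ) (hxb : 0 ≤ x b)
    (hle : G.linkWeight r x b ≤ G.linkWeight r x a) :
    G.cliqueWeight r x ≤ G.cliqueWeight r (update (update x b 0) a (x a + x b)) := by
  set y := update (update x b 0) a (x a + x b)
  have hya : y a = x a + x b := by simp [y]
  have hyb : y b = 0 := by simp [y, hab.symm]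
  have hy : ∀ v, v ≠ a → v ≠ b → x v = y v := fun v hva hvb => by simp [y, hva, hvb]
  have hrest : ∑ S ∈ G.cliqueFinset r with a ∉ S ∧ b ∉ S, ∏ v ∈ S, x v
      = ∑ S ∈ G.cliqueFinset r with a ∉ S ∧ b ∉ S, ∏ v ∈ S, y v :=
    sum_congr rfl fun S hS => prod_congr rfl fun v hv => by
      obtain ⟨-, haS, hbS⟩ := mem_filter.1 hS
      exact hy v (by rintro rfl; exact haS hv) (by rintro rfl; exact hbS hv)
  rw [cliqueWeight_eq_of_not_adj hab hnadj x, cliqueWeight_eq_of_not_adj hab hnadj y,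
    ← linkWeight_congr hnadj hy, ← linkWeight_congr (a := b) (mt G.adj_symm hnadj)
      (fun v hvb hva => hy v hva hvb), hrest, hya, hyb]
  nlinarith [mul_le_mul_of_nonneg_left hle hxb]

theorem cliqueWeight_le_of_isClique_support (hG : G.CliqueFree (r + 1)) {x : V → ℝ}
    (hx : ∀ v, 0 ≤ x v) (hsupp : G.IsClique (Function.support x)) :
    G.cliqueWeight r x ≤ ((∑ v, x v) / r) ^ r := by
  by_cases h : ∃ S ∈ G.cliqueFinset r, ∏ v ∈ S, x v ≠ 0
  swap
  · push Not at h
    rw [cliqueWeight, sum_eq_zero h]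
    exact pow_nonneg (div_nonneg (sum_nonneg fun v _ => hx v) r.cast_nonneg) r
  obtain ⟨S₀, hS₀, hne₀⟩ := h
  have hS₀r : #S₀ = r := (mem_cliqueFinset_iff.1 hS₀).card_eq
  have hsub : ∀ S : Finset V, ∏ v ∈ S, x v ≠ 0 → (S : Set V) ⊆ Function.support x :=
    fun S h v hv => prod_ne_zero_iff.1 h v hv
  -- a clique of nonzero weight lies in the clique `support x`, which has at most `r` vertices
  have huniq : ∀ S ∈ G.cliqueFinset r, S ≠ S₀ → ∏ v ∈ S, x v = 0 := by
    intro S hS hne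
    by_contra h
    have hunion : #(S ∪ S₀) ≤ #S₀ := hS₀r ▸ IsClique.card_le_of_cliqueFree hG
      (hsupp.subset (by push_cast; exact Set.union_subset (hsub S h) (hsub S₀ hne₀)))
    have hSS₀ : S ⊆ S₀ := (eq_of_subset_of_card_le subset_union_right hunion) ▸ subset_union_left
    exact hne (eq_of_subset_of_card_le hSS₀
      (by rw [hS₀r, (mem_cliqueFinset_iff.1 hS).card_eq]))
  calc G.cliqueWeight r x = ∏ v ∈ S₀, x v := sum_eq_single_of_mem S₀ hS₀ huniq
    _ ≤ ((∑ v ∈ S₀, x v) / r) ^ r := hS₀r ▸ Real.prod_le_mean_pow S₀ fun v _ => hx v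
    _ ≤ ((∑ v, x v) / r) ^ r := pow_le_pow_left₀ (div_nonneg (sum_nonneg fun v _ => hx v)
      r.cast_nonneg) (div_le_div_of_nonneg_right (sum_le_univ_sum_of_nonneg hx) r.cast_nonneg) r

theorem cliqueWeight_le (hG : G.CliqueFree (r + 1)) (x : V → ℝ) (hx : ∀ v, 0 ≤ x v) :
    G.cliqueWeight r x ≤ ((∑ v, x v) / r) ^ r := by
  induction hn : (Function.support x).ncard using Nat.strong_induction_on generalizing x with
  | _ n ih =>
  by_cases hcl : G.IsClique (Function.support x)
  · exact cliqueWeight_le_of_isClique_support hG hx hcl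
  obtain ⟨a, ha, b, hb, hab, hnadj⟩ : ∃ a ∈ Function.support x, ∃ b ∈ Function.support x,
      a ≠ b ∧ ¬ G.Adj a b := by
    simpa [IsClique, Set.Pairwise] using hcl
  wlog hle : G.linkWeight r x b ≤ G.linkWeight r x a generalizing a b
  · exact this b hb a ha hab.symm (mt G.adj_symm hnadj) (le_of_not_ge hle)
  set y := update (update x b 0) a (x a + x b)
  have hy : ∀ v, 0 ≤ y v := fun v => by
    unfold y
    rcases eq_or_ne v a with rfl | hva
    · simpa using add_nonneg (hx v) (hx b)
    rcases eq_or_ne v b with rfl | hvb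
    · simp [hva]
    · simpa [hva, hvb] using hx v
  have hsum : ∑ v, y v = ∑ v, x v := by
    simp only [y, mem_univ, sum_update_of_mem, subset_univ, sum_sdiff_eq_sub, sum_singleton,
      zero_add, ne_eq, hab, not_false_eq_true, update_of_ne]
    ring
  have hsupp : Function.support y ⊂ Function.support x := by
    refine (Set.ssubset_iff_of_subset fun v hv => ?_).2 ⟨b, hb, by simp [y, hab.symm]⟩
    rcases eq_or_ne v a with rfl | hva
    · exact ha
    rcases eq_or_ne v b with rfl | hvb
    · simp [y, hva] at hv
    · simpa [y, hva, hvb] using hv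
  calc G.cliqueWeight r x ≤ G.cliqueWeight r y := cliqueWeight_le_update hab hnadj x (hx b) hle
    _ ≤ ((∑ v, y v) / r) ^ r := ih _ (hn ▸ Set.ncard_lt_ncard hsupp) y hy rfl
    _ = ((∑ v, x v) / r) ^ r := by rw [hsum]

theorem CliqueFree.card_cliqueFinset_le (hG : G.CliqueFree (r + 1)) :
    (#(G.cliqueFinset r) : ℝ) ≤ ((Fintype.card V : ℝ) / r) ^ r := by
  simpa [cliqueWeight] using cliqueWeight_le hG (fun _ => 1) fun _ => zero_le_one

end CliqueWeight

theorem card_cliqueFinset_le_card_cliqueFinset_induce_compl_pair {V : Type*} [Fintype V]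
    [DecidableEq V] {H : SimpleGraph V} [DecidableRel H.Adj] {s : ℕ} {u v : V} (huv : u ≠ v)
    (hcover : ∀ S, H.IsNClique s S → u ∈ S ∧ v ∈ S) :
    #(H.cliqueFinset s) ≤ #((H.induce ({u, v}ᶜ : Set V)).cliqueFinset (s - 2)) := by
  refine (card_le_card fun S hS => ?_).trans (card_image_le (f := fun K =>
    insert u (insert v (K.map (Embedding.subtype (· ∈ ({u, v}ᶜ : Set V)))))))
  rw [mem_cliqueFinset_iff] at hS
  obtain ⟨hu, hv⟩ := hcover S hS
  have hfilter : S.filter (· ∈ ({u, v}ᶜ : Set V)) = S \ {u, v} := by ext; simp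
  refine mem_image.2 ⟨S.subtype (· ∈ ({u, v}ᶜ : Set V)), ?_, ?_⟩
  · rw [mem_cliqueFinset_iff, isNClique_induce_iff, subtype_map, hfilter]
    refine ⟨hS.isClique.subset (by simp), ?_⟩
    rw [card_sdiff_of_subset (insert_subset hu (singleton_subset_iff.2 hv)), card_pair huv,
      hS.card_eq]
  · ext w
    simp only [subtype_map, hfilter, mem_insert, mem_sdiff, mem_singleton]
    constructor
    · rintro (rfl | rfl | ⟨hw, -⟩) <;> assumption
    · tauto

theorem cliqueFree_induce_compl_pair {V : Type*} [DecidableEq V] {H : SimpleGraph V} {s : ℕ}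
    {u v : V} (hs : 2 ≤ s) (huv : u ≠ v)
    (hcover : ∀ S, H.IsNClique s S → u ∈ S ∧ v ∈ S)
    (hadj : ∀ w, w ≠ u → w ≠ v → H.Adj u w) :
    (H.induce ({u, v}ᶜ : Set V)).CliqueFree (s - 2 + 1) := by
  rw [cliqueFree_induce_iff]
  intro K hK hclique
  have hKuv : ∀ w ∈ K, w ≠ u ∧ w ≠ v := fun w hw => by simpa [not_or] using hK hw
  have hinsert : H.IsNClique s (insert u K) := by
    simpa [show s - 2 + 1 + 1 = s by omega] using
      hclique.insert fun w hw => hadj w (hKuv w hw).1 (hKuv w hw).2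
  rcases mem_insert.1 (hcover _ hinsert).2 with h | h
  · exact huv h.symm
  · exact (hKuv v h).2 rfl

end SimpleGraph

/-- If every copy of `K_s` in `H` contains two fixed adjacent vertices `u, v`,
and every other vertex of `H` lies in some copy of `K_s`, then the number `t`
of copies of `K_s` satisfies `t ≤ ((|V(H)| - 2)/(s - 2))^(s-2)`. -/
theorem stmt_19 {V : Type*} [Fintype V] (s : ℕ) (hs : 3 ≤ s)
    (H : SimpleGraph V) (u v : V) (huv : H.Adj u v)
    (hcover : ∀ S : Finset V, S.card = s → H.IsClique (S : Set V) → u ∈ S ∧ v ∈ S)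
    (hspan : ∀ w : V, w ≠ u → w ≠ v →
      ∃ S : Finset V, S.card = s ∧ H.IsClique (S : Set V) ∧ w ∈ S)
    (t : ℕ) (ht : t = {S : Finset V | S.card = s ∧ H.IsClique (S : Set V)}.ncard) :
    (t : ℚ) ≤ (((Fintype.card V : ℚ) - 2) / ((s : ℚ) - 2)) ^ (s - 2) := by
  classical
  have hcover' : ∀ S, H.IsNClique s S → u ∈ S ∧ v ∈ S :=
    fun S hS => hcover S hS.card_eq hS.isClique
  have hadj : ∀ w, w ≠ u → w ≠ v → H.Adj u w := fun w hwu hwv => by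
    obtain ⟨S, hS, hclique, hw⟩ := hspan w hwu hwv
    exact hclique (hcover S hS hclique).1 hw hwu.symm
  have htcard : t = #(H.cliqueFinset s) := by
    rw [ht, ← Set.ncard_coe_finset]
    congr 1
    ext S
    simp [isNClique_iff, and_comm]
  have hbound := (cliqueFree_induce_compl_pair (by omega) huv.ne hcover' hadj).card_cliqueFinset_le
  have hcount := card_cliqueFinset_le_card_cliqueFinset_induce_compl_pair huv.ne hcover'
  rw [Fintype.card_compl_set, Set.card_insert _ (by simpa using huv.ne), Set.card_singleton]
    at hbound
  have hV : 2 ≤ Fintype.card V := Fintype.one_lt_card_iff_nontrivial.2 ⟨u, v, huv.ne⟩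
  push_cast [Nat.cast_sub hV, Nat.cast_sub (by omega : 2 ≤ s)] at hbound
  rw [← Rat.cast_le (K := ℝ), htcard]
  push_cast
  exact (Nat.cast_le.2 hcount).trans hbound
end
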